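/- arXiv:1802.04092 — 2 statements merged into one kernel-verified Lean document; each statement's English description precedes it below -/
import Mathlib

section
/- Let X, Y be normed spaces of analytic functions on the unit disk containing all monomials, T : X → Y a bounded linear operator, and (f_n) a sequence in X with f_n = Σ_j a_{n,j} z^j such that (i) Σ_j |a_{n,j}|·‖z^j‖_X ≤ C for all n, and (ii) for every fixed K, Σ_{j=0}^K |a_{n,j}|·‖z^j‖_X → 0 as n → ∞. Then limsup_n ‖T f_n‖_Y ≤ C·limsup_{j→∞} ‖T z^j‖_Y / ‖z^j‖_X. -/
set_option maxHeartbeats 1000000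

open Filter

theorem limsup_bound_abstract
    {X Y : Type*} [NormedAddCommGroup X] [NormedSpace ℂ X]
    [NormedAddCommGroup Y] [NormedSpace ℂ Y]
    (mono : ℕ → X)  -- mono j represents the monomial z^j in X
    (T : X →L[ℂ] Y) (f : ℕ → X) (a : ℕ → ℕ → ℂ) (C : ℝ)
    (hrep : ∀ n, HasSum (fun j => a n j • mono j) (f n))
    (hsummable : ∀ n, Summable fun j => ‖a n j‖ * ‖mono j‖)
    (hC : ∀ n, ∑' j, ‖a n j‖ * ‖mono j‖ ≤ C)
    (hsmall : ∀ K : ℕ,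
      Tendsto (fun n => ∑ j ∈ Finset.range (K + 1), ‖a n j‖ * ‖mono j‖) atTop (nhds 0)) :
    limsup (fun n => ‖T (f n)‖) atTop ≤
      C * limsup (fun j => ‖T (mono j)‖ / ‖mono j‖) atTop := by
  set u : ℕ → ℝ := fun j => ‖T (mono j)‖ / ‖mono j‖ with hu
  set L : ℝ := limsup u atTop with hLdef
  have hub : ∀ j, u j ≤ ‖T‖ := by
    intro j
    rcases eq_or_lt_of_le (norm_nonneg (mono j)) with h | h
    · simp [hu, ← h]
    · rw [hu, div_le_iff₀ h]
      exact T.le_opNorm _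
  have hbdd : IsBoundedUnder (· ≤ ·) atTop u := isBoundedUnder_of ⟨‖T‖, hub⟩
  have hunn : ∀ j, 0 ≤ u j := fun j => div_nonneg (norm_nonneg _) (norm_nonneg _)
  have hL0 : (0 : ℝ) ≤ L := le_limsup_of_frequently_le (Frequently.of_forall hunn) hbdd
  have hC0 : (0 : ℝ) ≤ C :=
    le_trans (tsum_nonneg fun j => mul_nonneg (norm_nonneg _) (norm_nonneg _)) (hC 0)
  have hsum2 : ∀ n, Summable fun j => ‖a n j‖ * ‖T (mono j)‖ := by
    intro n
    apply Summable.of_nonneg_of_le (fun j => mul_nonneg (norm_nonneg _) (norm_nonneg _))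
      (fun j => ?_) ((hsummable n).mul_left ‖T‖)
    calc ‖a n j‖ * ‖T (mono j)‖ ≤ ‖a n j‖ * (‖T‖ * ‖mono j‖) := by
          gcongr; exact T.le_opNorm _
      _ = ‖T‖ * (‖a n j‖ * ‖mono j‖) := by ring
  have hTf : ∀ n, ‖T (f n)‖ ≤ ∑' j, ‖a n j‖ * ‖T (mono j)‖ := by
    intro n
    have h1 : HasSum (fun j => a n j • T (mono j)) (T (f n)) := by
      simpa using T.hasSum (hrep n)
    calc ‖T (f n)‖ = ‖∑' j, a n j • T (mono j)‖ := by rw [h1.tsum_eq]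
      _ ≤ ∑' j, ‖a n j • T (mono j)‖ :=
          norm_tsum_le_tsum_norm (by simpa [norm_smul] using hsum2 n)
      _ = ∑' j, ‖a n j‖ * ‖T (mono j)‖ := by simp [norm_smul]
  have hg0 : ∀ n, (0:ℝ) ≤ ‖T (f n)‖ := fun n => norm_nonneg _
  have hcob : IsCoboundedUnder (· ≤ ·) atTop (fun n => ‖T (f n)‖) :=
    IsBoundedUnder.isCoboundedUnder_le (isBoundedUnder_of ⟨0, hg0⟩)
  have key : ∀ ε > (0:ℝ), limsup (fun n => ‖T (f n)‖) atTop ≤ (L + ε) * C + ε := by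
    intro ε hε
    have hev : ∀ᶠ j in atTop, u j < L + ε :=
      eventually_lt_of_limsup_lt (by linarith) hbdd
    obtain ⟨K, hK⟩ := eventually_atTop.mp hev
    have hmbd : ∀ j, K ≤ j → ‖T (mono j)‖ ≤ (L + ε) * ‖mono j‖ := by
      intro j hj
      rcases eq_or_lt_of_le (norm_nonneg (mono j)) with h | h
      · have : mono j = 0 := norm_eq_zero.mp h.symm
        simp [this]
      · have := hK j hj
        rw [hu] at this
        have := (div_lt_iff₀ h).mp this
        linarith
    have hbound : ∀ n, ‖T (f n)‖ ≤
        ‖T‖ * (∑ j ∈ Finset.range (K + 1), ‖a n j‖ * ‖mono j‖) + (L + ε) * C := by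
      intro n
      have hsplit := Summable.sum_add_tsum_nat_add (K + 1) (hsum2 n)
      have htail_sum : Summable fun i => ‖a n (i + (K+1))‖ * ‖T (mono (i + (K+1)))‖ :=
        (summable_nat_add_iff (K+1)).mpr (hsum2 n)
      have htail_sum' : Summable fun i => (L + ε) * (‖a n (i + (K+1))‖ * ‖mono (i + (K+1))‖) :=
        (((summable_nat_add_iff (K+1)).mpr (hsummable n)).mul_left _)
      have hhead : ∑ j ∈ Finset.range (K + 1), ‖a n j‖ * ‖T (mono j)‖ ≤
          ‖T‖ * ∑ j ∈ Finset.range (K + 1), ‖a n j‖ * ‖mono j‖ := by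
        rw [Finset.mul_sum]
        apply Finset.sum_le_sum
        intro j _
        calc ‖a n j‖ * ‖T (mono j)‖ ≤ ‖a n j‖ * (‖T‖ * ‖mono j‖) := by
              gcongr; exact T.le_opNorm _
          _ = ‖T‖ * (‖a n j‖ * ‖mono j‖) := by ring
      have htail : ∑' i, ‖a n (i + (K+1))‖ * ‖T (mono (i + (K+1)))‖ ≤ (L + ε) * C := by
        calc ∑' i, ‖a n (i + (K+1))‖ * ‖T (mono (i + (K+1)))‖
            ≤ ∑' i, (L + ε) * (‖a n (i + (K+1))‖ * ‖mono (i + (K+1))‖) := by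
              apply Summable.tsum_le_tsum _ htail_sum htail_sum'
              intro i
              calc ‖a n (i + (K+1))‖ * ‖T (mono (i + (K+1)))‖
                  ≤ ‖a n (i + (K+1))‖ * ((L + ε) * ‖mono (i + (K+1))‖) := by
                    exact mul_le_mul_of_nonneg_left (hmbd _ (by omega)) (norm_nonneg _)
                _ = (L + ε) * (‖a n (i + (K+1))‖ * ‖mono (i + (K+1))‖) := by ring
          _ = (L + ε) * ∑' i, ‖a n (i + (K+1))‖ * ‖mono (i + (K+1))‖ := by
              rw [tsum_mul_left]
          _ ≤ (L + ε) * C := by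
              apply mul_le_mul_of_nonneg_left _ (by linarith)
              have hsplit2 := Summable.sum_add_tsum_nat_add (K + 1) (hsummable n)
              have hhead0 : (0:ℝ) ≤ ∑ j ∈ Finset.range (K + 1), ‖a n j‖ * ‖mono j‖ :=
                Finset.sum_nonneg fun j _ => mul_nonneg (norm_nonneg _) (norm_nonneg _)
              have := hC n
              linarith
      calc ‖T (f n)‖ ≤ ∑' j, ‖a n j‖ * ‖T (mono j)‖ := hTf n
        _ = ∑ j ∈ Finset.range (K + 1), ‖a n j‖ * ‖T (mono j)‖
            + ∑' i, ‖a n (i + (K+1))‖ * ‖T (mono (i + (K+1)))‖ := hsplit.symm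
        _ ≤ ‖T‖ * (∑ j ∈ Finset.range (K + 1), ‖a n j‖ * ‖mono j‖) + (L + ε) * C := by
            exact add_le_add hhead htail
    have hsmallev : ∀ᶠ n in atTop,
        ‖T‖ * (∑ j ∈ Finset.range (K + 1), ‖a n j‖ * ‖mono j‖) < ε := by
      have : Tendsto (fun n => ‖T‖ * ∑ j ∈ Finset.range (K + 1), ‖a n j‖ * ‖mono j‖)
          atTop (nhds 0) := by
        simpa using (hsmall K).const_mul ‖T‖
      exact this.eventually_lt_const hε
    apply limsup_le_of_le hcob
    filter_upwards [hsmallev] with n hn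
    have := hbound n
    linarith
  have final : ∀ δ > (0:ℝ), limsup (fun n => ‖T (f n)‖) atTop ≤ C * L + δ := by
    intro δ hδ
    have hε : (0:ℝ) < δ / (C + 1) := div_pos hδ (by linarith)
    have := key _ hε
    have h1 : (L + δ / (C + 1)) * C + δ / (C + 1) ≤ C * L + δ := by
      have h2 : δ / (C + 1) * (C + 1) = δ := div_mul_cancel₀ _ (by linarith)
      nlinarith [hε.le]
    linarith
  exact le_of_forall_pos_le_add final
end

section
/- For a in the open unit disk and n ≥ 1, let γ be the constant term and b_1, ..., b_N the Taylor coefficients of degrees 1 through N of a finite product F(z) = σ_{a_1}(z)·∏_{i=2}^m σ_{a_i}(z)². Then Σ_{l=1}^N |b_l| ≤ (|a_1| + (1-|a_1|²)Σ_{l=0}^{N-1}|a_1|^l)·∏_{i=2}^m (|a_i| + (1-|a_i|²)Σ_{l=0}^{N-1}|a_i|^l)² - |γ|, where γ = a_1·∏_{i=2}^m a_i². -/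
/-- The Möbius map `σ_a(z) = (a - z)/(1 - conj(a) z)`. -/
noncomputable def mobius (a z : ℂ) : ℂ := (a - z) / (1 - (starRingEnd ℂ) a * z)

open Finset

namespace MobiusAux

/-- Taylor coefficients of the Möbius map. -/
noncomputable def mobCoeff (a : ℂ) : ℕ → ℂ
  | 0 => a
  | (l + 1) => -(1 - a * (starRingEnd ℂ) a) * ((starRingEnd ℂ) a) ^ l

lemma one_sub_mul_conj (a : ℂ) :
    (1 : ℂ) - a * (starRingEnd ℂ) a = ((1 - ‖a‖ ^ 2 : ℝ) : ℂ) := by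
  rw [Complex.mul_conj']
  push_cast
  ring

lemma norm_mobCoeff_succ (a : ℂ) (ha : ‖a‖ < 1) (l : ℕ) :
    ‖mobCoeff a (l + 1)‖ = (1 - ‖a‖ ^ 2) * ‖a‖ ^ l := by
  have h1 : (0:ℝ) ≤ 1 - ‖a‖ ^ 2 := by nlinarith [norm_nonneg a]
  have : mobCoeff a (l + 1) = -(((1 - ‖a‖ ^ 2 : ℝ) : ℂ) * ((starRingEnd ℂ) a) ^ l) := by
    rw [mobCoeff, one_sub_mul_conj, neg_mul]
  rw [this, norm_neg, norm_mul, norm_pow, RCLike.norm_conj, Complex.norm_real,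
    Real.norm_eq_abs, abs_of_nonneg h1]

lemma hasSum_mobCoeff {a : ℂ} (ha : ‖a‖ < 1) {z : ℂ} (hz : ‖z‖ < 1) :
    HasSum (fun l => mobCoeff a l * z ^ l) (mobius a z) := by
  set w := (starRingEnd ℂ) a * z with hw
  have hwn : ‖w‖ < 1 := by
    have : ‖w‖ = ‖a‖ * ‖z‖ := by rw [hw, norm_mul, RCLike.norm_conj]
    rw [this]
    nlinarith [norm_nonneg a, norm_nonneg z]
  have hgeo : HasSum (fun l : ℕ => w ^ l) (1 - w)⁻¹ :=
    hasSum_geometric_of_norm_lt_one hwn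
  have hA : HasSum (fun l : ℕ => a * w ^ l) (a * (1 - w)⁻¹) := hgeo.mul_left a
  have hB0 : HasSum (fun l : ℕ => z * w ^ l) (z * (1 - w)⁻¹) := hgeo.mul_left z
  set G : ℕ → ℂ := fun l => Nat.rec 0 (fun l _ => z * w ^ l) l with hG
  have hB : HasSum G (z * (1 - w)⁻¹) := by
    have h0 : HasSum (fun n : ℕ => G (n + 1)) (z * (1 - w)⁻¹) := hB0
    have := (hasSum_nat_add_iff (f := G) 1).mp h0
    simpa [hG] using this
  have hsub := hA.sub hB
  have heq : (fun l => mobCoeff a l * z ^ l) = fun l => a * w ^ l - G l := by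
    funext l
    cases l with
    | zero => simp [mobCoeff, hG]
    | succ l =>
      simp only [mobCoeff, hG, hw]
      rw [mul_pow, mul_pow]
      ring
  rw [heq]
  have : mobius a z = a * (1 - w)⁻¹ - z * (1 - w)⁻¹ := by
    rw [mobius, hw, div_eq_mul_inv, sub_mul]
  rw [this]
  exact hsub

lemma summable_norm_mobCoeff {a : ℂ} (ha : ‖a‖ < 1) :
    Summable fun l => ‖mobCoeff a l‖ := by
  rw [← summable_nat_add_iff 1]
  have : (fun n : ℕ => ‖mobCoeff a (n + 1)‖) = fun n => (1 - ‖a‖ ^ 2) * ‖a‖ ^ n := by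
    funext n; exact norm_mobCoeff_succ a ha n
  rw [this]
  exact (summable_geometric_of_lt_one (norm_nonneg a) ha).mul_left _

lemma sum_norm_mobCoeff (a : ℂ) (ha : ‖a‖ < 1) (N : ℕ) :
    ∑ l ∈ range (N + 1), ‖mobCoeff a l‖ =
      ‖a‖ + (1 - ‖a‖ ^ 2) * ∑ l ∈ range N, ‖a‖ ^ l := by
  rw [Finset.sum_range_succ']
  have : ∀ l ∈ range N, ‖mobCoeff a (l + 1)‖ = (1 - ‖a‖ ^ 2) * ‖a‖ ^ l :=
    fun l _ => norm_mobCoeff_succ a ha l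
  rw [Finset.sum_congr rfl this, ← Finset.mul_sum]
  simp [mobCoeff]
  ring

lemma mul_step {f g : ℂ → ℂ} {p q : ℕ → ℂ}
    (hp1 : ∀ z : ℂ, ‖z‖ < 1 → HasSum (fun l => p l * z ^ l) (f z))
    (hp2 : Summable fun l => ‖p l‖)
    (hq1 : ∀ z : ℂ, ‖z‖ < 1 → HasSum (fun l => q l * z ^ l) (g z))
    (hq2 : Summable fun l => ‖q l‖) :
    ∃ r : ℕ → ℂ,
      (∀ z : ℂ, ‖z‖ < 1 → HasSum (fun l => r l * z ^ l) (f z * g z)) ∧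
      (Summable fun l => ‖r l‖) ∧
      ∀ N, ∑ l ∈ range N, ‖r l‖ ≤ (∑ l ∈ range N, ‖p l‖) * (∑ l ∈ range N, ‖q l‖) := by
  classical
  refine ⟨fun n => ∑ kl ∈ Finset.HasAntidiagonal.antidiagonal n, p kl.1 * q kl.2, ?_, ?_, ?_⟩
  · intro z hz
    have hPnorm : Summable fun l => ‖p l * z ^ l‖ := by
      refine hp2.of_nonneg_of_le (fun _ => norm_nonneg _) fun l => ?_
      rw [norm_mul, norm_pow]
      calc ‖p l‖ * ‖z‖ ^ l ≤ ‖p l‖ * 1 := by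
            exact mul_le_mul_of_nonneg_left (pow_le_one₀ (norm_nonneg z) hz.le)
              (norm_nonneg _)
        _ = ‖p l‖ := mul_one _
    have hQnorm : Summable fun l => ‖q l * z ^ l‖ := by
      refine hq2.of_nonneg_of_le (fun _ => norm_nonneg _) fun l => ?_
      rw [norm_mul, norm_pow]
      calc ‖q l‖ * ‖z‖ ^ l ≤ ‖q l‖ * 1 := by
            exact mul_le_mul_of_nonneg_left (pow_le_one₀ (norm_nonneg z) hz.le)
              (norm_nonneg _)
        _ = ‖q l‖ := mul_one _
    have hsum : Summable fun n =>
        ∑ kl ∈ Finset.HasAntidiagonal.antidiagonal n, (p kl.1 * z ^ kl.1) * (q kl.2 * z ^ kl.2) :=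
      (summable_norm_sum_mul_antidiagonal_of_summable_norm hPnorm hQnorm).of_norm
    have htsum := tsum_mul_tsum_eq_tsum_sum_antidiagonal_of_summable_norm hPnorm hQnorm
    have heq : (fun n => (∑ kl ∈ Finset.HasAntidiagonal.antidiagonal n, p kl.1 * q kl.2) * z ^ n) =
        fun n => ∑ kl ∈ Finset.HasAntidiagonal.antidiagonal n, (p kl.1 * z ^ kl.1) * (q kl.2 * z ^ kl.2) := by
      funext n
      rw [Finset.sum_mul]
      refine Finset.sum_congr rfl fun kl hkl => ?_
      rw [← Finset.HasAntidiagonal.mem_antidiagonal.mp hkl, pow_add]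
      ring
    rw [heq]
    refine hsum.hasSum_iff.mpr ?_
    rw [← htsum, (hp1 z hz).tsum_eq, (hq1 z hz).tsum_eq]
  · have hmaj : Summable fun n => ∑ kl ∈ Finset.HasAntidiagonal.antidiagonal n, ‖p kl.1‖ * ‖q kl.2‖ := by
      have h1 : Summable fun l => ‖(‖p l‖)‖ := by simpa using hp2
      have h2 : Summable fun l => ‖(‖q l‖)‖ := by simpa using hq2
      exact (summable_norm_sum_mul_antidiagonal_of_summable_norm h1 h2).of_norm
    refine hmaj.of_nonneg_of_le (fun _ => norm_nonneg _) fun n => ?_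
    calc ‖∑ kl ∈ Finset.HasAntidiagonal.antidiagonal n, p kl.1 * q kl.2‖ ≤
          ∑ kl ∈ Finset.HasAntidiagonal.antidiagonal n, ‖p kl.1 * q kl.2‖ := norm_sum_le _ _
      _ = ∑ kl ∈ Finset.HasAntidiagonal.antidiagonal n, ‖p kl.1‖ * ‖q kl.2‖ := by
          refine Finset.sum_congr rfl fun kl _ => norm_mul _ _
  · intro N
    have step1 : ∑ n ∈ range N, ‖∑ kl ∈ Finset.HasAntidiagonal.antidiagonal n, p kl.1 * q kl.2‖ ≤
        ∑ n ∈ range N, ∑ kl ∈ Finset.HasAntidiagonal.antidiagonal n, ‖p kl.1‖ * ‖q kl.2‖ := by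
      refine Finset.sum_le_sum fun n _ => ?_
      calc ‖∑ kl ∈ Finset.HasAntidiagonal.antidiagonal n, p kl.1 * q kl.2‖ ≤
            ∑ kl ∈ Finset.HasAntidiagonal.antidiagonal n, ‖p kl.1 * q kl.2‖ := norm_sum_le _ _
        _ = ∑ kl ∈ Finset.HasAntidiagonal.antidiagonal n, ‖p kl.1‖ * ‖q kl.2‖ :=
            Finset.sum_congr rfl fun kl _ => norm_mul _ _
    have hdisj : (range N : Set ℕ).PairwiseDisjoint Finset.HasAntidiagonal.antidiagonal := by
      intro x _ y _ hxy
      refine Finset.disjoint_left.mpr fun kl h1 h2 => hxy ?_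
      rw [← Finset.HasAntidiagonal.mem_antidiagonal.mp h1, Finset.HasAntidiagonal.mem_antidiagonal.mp h2]
    have step2 : ∑ n ∈ range N, ∑ kl ∈ Finset.HasAntidiagonal.antidiagonal n, ‖p kl.1‖ * ‖q kl.2‖ =
        ∑ kl ∈ (range N).biUnion Finset.HasAntidiagonal.antidiagonal, ‖p kl.1‖ * ‖q kl.2‖ :=
      (Finset.sum_biUnion hdisj).symm
    have hsubset : (range N).biUnion Finset.HasAntidiagonal.antidiagonal ⊆ range N ×ˢ range N := by
      intro kl hkl
      obtain ⟨n, hn, hkl⟩ := Finset.mem_biUnion.mp hkl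
      have h := Finset.HasAntidiagonal.mem_antidiagonal.mp hkl
      rw [Finset.mem_range] at hn
      refine Finset.mem_product.mpr ⟨Finset.mem_range.mpr ?_, Finset.mem_range.mpr ?_⟩
      · omega
      · omega
    have step3 : ∑ kl ∈ (range N).biUnion Finset.HasAntidiagonal.antidiagonal, ‖p kl.1‖ * ‖q kl.2‖ ≤
        ∑ kl ∈ range N ×ˢ range N, ‖p kl.1‖ * ‖q kl.2‖ := by
      refine Finset.sum_le_sum_of_subset_of_nonneg hsubset fun kl _ _ =>
        mul_nonneg (norm_nonneg _) (norm_nonneg _)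
    have step4 : ∑ kl ∈ range N ×ˢ range N, ‖p kl.1‖ * ‖q kl.2‖ =
        (∑ l ∈ range N, ‖p l‖) * (∑ l ∈ range N, ‖q l‖) := by
      rw [Finset.sum_mul_sum, Finset.sum_product]
    calc ∑ n ∈ range N, ‖∑ kl ∈ Finset.HasAntidiagonal.antidiagonal n, p kl.1 * q kl.2‖ ≤
          ∑ n ∈ range N, ∑ kl ∈ Finset.HasAntidiagonal.antidiagonal n, ‖p kl.1‖ * ‖q kl.2‖ := step1
      _ = _ := step2
      _ ≤ _ := step3
      _ = _ := step4

lemma prod_step {ι : Type*} (s : Finset ι) (f : ι → ℂ → ℂ) (p : ι → ℕ → ℂ)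
    (h1 : ∀ i ∈ s, ∀ z : ℂ, ‖z‖ < 1 → HasSum (fun l => p i l * z ^ l) (f i z))
    (h2 : ∀ i ∈ s, Summable fun l => ‖p i l‖) :
    ∃ r : ℕ → ℂ,
      (∀ z : ℂ, ‖z‖ < 1 → HasSum (fun l => r l * z ^ l) (∏ i ∈ s, f i z)) ∧
      (Summable fun l => ‖r l‖) ∧
      ∀ N, ∑ l ∈ range N, ‖r l‖ ≤ ∏ i ∈ s, ∑ l ∈ range N, ‖p i l‖ := by
  classical
  induction s using Finset.cons_induction with
  | empty =>
    refine ⟨fun n => if n = 0 then 1 else 0, ?_, ?_, ?_⟩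
    · intro z hz
      have : (fun l : ℕ => (if l = 0 then (1:ℂ) else 0) * z ^ l) =
          fun l => if l = 0 then (1:ℂ) else 0 := by
        funext l
        by_cases h : l = 0 <;> simp [h]
      rw [this]
      simpa using hasSum_ite_eq (0 : ℕ) (1 : ℂ)
    · have : (fun l : ℕ => ‖if l = 0 then (1:ℂ) else 0‖) =
          fun l => if l = 0 then (1:ℝ) else 0 := by
        funext l
        by_cases h : l = 0 <;> simp [h]
      rw [this]
      exact (hasSum_ite_eq (0 : ℕ) (1 : ℝ)).summable
    · intro N
      have : (∑ l ∈ range N, ‖if l = 0 then (1:ℂ) else 0‖) =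
          ∑ l ∈ range N, if l = 0 then (1:ℝ) else 0 := by
        refine Finset.sum_congr rfl fun l _ => ?_
        by_cases h : l = 0 <;> simp [h]
      rw [this, Finset.prod_empty, Finset.sum_ite_eq' (range N) 0 (fun _ => (1:ℝ))]
      by_cases h : (0:ℕ) ∈ range N <;> simp [h]
  | cons i s his ih =>
    obtain ⟨r, hr1, hr2, hr3⟩ := ih (fun j hj => h1 j (Finset.mem_cons_of_mem hj))
      (fun j hj => h2 j (Finset.mem_cons_of_mem hj))
    obtain ⟨r', h1', h2', h3'⟩ := mul_step
      (h1 i (Finset.mem_cons_self i s)) (h2 i (Finset.mem_cons_self i s)) hr1 hr2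
    refine ⟨r', ?_, h2', ?_⟩
    · intro z hz
      rw [Finset.prod_cons]
      exact h1' z hz
    · intro N
      rw [Finset.prod_cons]
      calc ∑ l ∈ range N, ‖r' l‖ ≤
            (∑ l ∈ range N, ‖p i l‖) * (∑ l ∈ range N, ‖r l‖) := h3' N
        _ ≤ (∑ l ∈ range N, ‖p i l‖) * ∏ j ∈ s, ∑ l ∈ range N, ‖p j l‖ :=
            mul_le_mul_of_nonneg_left (hr3 N)
              (Finset.sum_nonneg fun _ _ => norm_nonneg _)

lemma coeff_eq {c d : ℕ → ℂ} {F : ℂ → ℂ}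
    (hc : ∀ z : ℂ, ‖z‖ < 1 → HasSum (fun l => c l * z ^ l) (F z))
    (hd : ∀ z : ℂ, ‖z‖ < 1 → HasSum (fun l => d l * z ^ l) (F z)) : c = d := by
  have key : ∀ e : ℕ → ℂ, (∀ z : ℂ, ‖z‖ < 1 → HasSum (fun l => e l * z ^ l) (F z)) →
      HasFPowerSeriesAt F (FormalMultilinearSeries.ofScalars ℂ e) 0 := by
    intro e he
    refine ⟨1, ?_, one_pos, ?_⟩
    · refine ENNReal.le_of_forall_nnreal_lt fun r hr => ?_
      have hrn : ‖((r : ℝ) : ℂ)‖ < 1 := by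
        rw [Complex.norm_real, Real.norm_eq_abs, abs_of_nonneg r.coe_nonneg]
        exact_mod_cast hr
      have hsummable := (he ((r : ℝ) : ℂ) hrn).summable
      have htend : Filter.Tendsto (fun n => ‖e n * ((r : ℝ) : ℂ) ^ n‖) Filter.atTop (nhds 0) := by
        rw [← tendsto_zero_iff_norm_tendsto_zero]
        exact hsummable.tendsto_atTop_zero
      refine FormalMultilinearSeries.le_radius_of_tendsto _ (l := 0) ?_
      have : (fun n => ‖FormalMultilinearSeries.ofScalars ℂ e n‖ * (r : ℝ) ^ n) =
          fun n => ‖e n * ((r : ℝ) : ℂ) ^ n‖ := by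
        funext n
        rw [FormalMultilinearSeries.ofScalars_norm, norm_mul, norm_pow, Complex.norm_real,
          Real.norm_eq_abs, abs_of_nonneg r.coe_nonneg]
      rw [this]
      exact htend
    · intro y hy
      have hyn : ‖y‖ < 1 := by
        rw [EMetric.mem_ball, edist_dist, dist_zero_right] at hy
        exact ENNReal.ofReal_lt_one.mp hy
      have : (fun n => FormalMultilinearSeries.ofScalars ℂ e n fun _ => y) =
          fun n => e n * y ^ n := by
        funext n
        rw [FormalMultilinearSeries.ofScalars_apply_eq, smul_eq_mul]
      rw [this, zero_add]
      exact he y hyn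
  have := (key c hc).eq_formalMultilinearSeries (key d hd)
  exact FormalMultilinearSeries.ofScalars_series_injective ℂ ℂ this

end MobiusAux

open MobiusAux in
theorem truncated_coeff_sum_bound_of_mobius_product
    (m N : ℕ) (hN : 1 ≤ N) (a₀ : ℂ) (a : Fin m → ℂ)
    (ha₀ : ‖a₀‖ < 1) (ha : ∀ i, ‖a i‖ < 1) (c : ℕ → ℂ)
    (hc : ∀ z : ℂ, ‖z‖ < 1 →
      HasSum (fun l => c l * z ^ l) (mobius a₀ z * ∏ i, (mobius (a i) z) ^ 2))
    (hγ : c 0 = a₀ * ∏ i, (a i) ^ 2) :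
    ∑ l ∈ Finset.Icc 1 N, ‖c l‖ ≤
      (‖a₀‖ + (1 - ‖a₀‖ ^ 2) * ∑ l ∈ Finset.range N, ‖a₀‖ ^ l) *
          ∏ i, (‖a i‖ + (1 - ‖a i‖ ^ 2) * ∑ l ∈ Finset.range N, ‖a i‖ ^ l) ^ 2 -
        ‖c 0‖ := by
  classical
  -- coefficients for the squared Möbius maps
  have hsq : ∀ i : Fin m, ∃ q : ℕ → ℂ,
      (∀ z : ℂ, ‖z‖ < 1 → HasSum (fun l => q l * z ^ l) ((mobius (a i) z) ^ 2)) ∧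
      (Summable fun l => ‖q l‖) ∧
      ∀ N', ∑ l ∈ range N', ‖q l‖ ≤
        (∑ l ∈ range N', ‖mobCoeff (a i) l‖) * (∑ l ∈ range N', ‖mobCoeff (a i) l‖) := by
    intro i
    obtain ⟨q, hq1, hq2, hq3⟩ := mul_step
      (fun z hz => hasSum_mobCoeff (ha i) hz) (summable_norm_mobCoeff (ha i))
      (fun z hz => hasSum_mobCoeff (ha i) hz) (summable_norm_mobCoeff (ha i))
    refine ⟨q, fun z hz => ?_, hq2, hq3⟩
    rw [pow_two]
    exact hq1 z hz
  choose q hq1 hq2 hq3 using hsq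
  obtain ⟨r, hr1, hr2, hr3⟩ := prod_step Finset.univ (fun i z => (mobius (a i) z) ^ 2) q
    (fun i _ => hq1 i) (fun i _ => hq2 i)
  obtain ⟨r', hR1, hR2, hR3⟩ := mul_step
    (fun z hz => hasSum_mobCoeff ha₀ hz) (summable_norm_mobCoeff ha₀) hr1 hr2
  have hcr : c = r' := coeff_eq hc hR1
  -- abbreviations
  set S₀ : ℝ := ‖a₀‖ + (1 - ‖a₀‖ ^ 2) * ∑ l ∈ range N, ‖a₀‖ ^ l with hS₀
  set S : Fin m → ℝ := fun i => ‖a i‖ + (1 - ‖a i‖ ^ 2) * ∑ l ∈ range N, ‖a i‖ ^ l with hS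
  have hS₀eq : ∑ l ∈ range (N + 1), ‖mobCoeff a₀ l‖ = S₀ := sum_norm_mobCoeff a₀ ha₀ N
  have hSeq : ∀ i, ∑ l ∈ range (N + 1), ‖mobCoeff (a i) l‖ = S i :=
    fun i => sum_norm_mobCoeff (a i) (ha i) N
  have hS₀nonneg : 0 ≤ S₀ := by
    rw [← hS₀eq]; exact Finset.sum_nonneg fun _ _ => norm_nonneg _
  -- main bound on the full truncated sum
  have hmain : ∑ l ∈ range (N + 1), ‖c l‖ ≤ S₀ * ∏ i, (S i) ^ 2 := by
    rw [hcr]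
    calc ∑ l ∈ range (N + 1), ‖r' l‖ ≤
          (∑ l ∈ range (N + 1), ‖mobCoeff a₀ l‖) * (∑ l ∈ range (N + 1), ‖r l‖) := hR3 (N + 1)
      _ ≤ (∑ l ∈ range (N + 1), ‖mobCoeff a₀ l‖) *
            ∏ i, ∑ l ∈ range (N + 1), ‖q i l‖ :=
          mul_le_mul_of_nonneg_left (hr3 (N + 1))
            (Finset.sum_nonneg fun _ _ => norm_nonneg _)
      _ ≤ (∑ l ∈ range (N + 1), ‖mobCoeff a₀ l‖) * ∏ i, (S i) ^ 2 := by
          refine mul_le_mul_of_nonneg_left ?_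
            (Finset.sum_nonneg fun _ _ => norm_nonneg _)
          refine Finset.prod_le_prod (fun i _ => Finset.sum_nonneg fun _ _ => norm_nonneg _)
            fun i _ => ?_
          rw [← hSeq i, pow_two]
          exact hq3 i (N + 1)
      _ = S₀ * ∏ i, (S i) ^ 2 := by rw [hS₀eq]
  -- split off the constant term
  have hsplit : ∑ l ∈ range (N + 1), ‖c l‖ = ‖c 0‖ + ∑ l ∈ Finset.Icc 1 N, ‖c l‖ := by
    rw [Finset.range_eq_Ico, Finset.sum_eq_sum_Ico_succ_bot (Nat.succ_pos N),
      Nat.succ_eq_add_one, Finset.Ico_add_one_right_eq_Icc]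
  have := hmain
  rw [hsplit] at this
  linarith
end
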